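/- arXiv:1207.3128 — 11 statements merged into one kernel-verified Lean document; each statement's English description precedes it below -/
import Mathlib

section
/- For all y with 0 ≤ y < π/2, one has Z₁(y) := (2·(y/sin y)^2 − 1)^2 − (y/sin²y − cot y)^2 ≥ 1, where at y = 0 the expressions are interpreted by their limits (so Z₁(0) = 1). -/
/-! Put `s = sin y`, `c = cos y`. Clearing denominators, `Z₁(y) ≥ 1` becomes
`(y - s c)² ≤ 4 y² (y² - s²)`. The left side is at most `y² s⁴` because `0 ≤ y - s c ≤ y s²`
(the upper bound is `c (y c - s) ≤ 0`), and `s⁴ ≤ y² s² ≤ 4 (y² - s²)`; the last inequality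
follows from the half-angle formula together with `x cos x ≤ sin x ≤ x`. -/

open Real

namespace Real

lemma mul_cos_le_sin {x : ℝ} (hx₀ : 0 ≤ x) (hx : x ≤ π) : x * cos x ≤ sin x := by
  rcases lt_or_ge x (π / 2) with hlt | hge
  · have hc : 0 < cos x := cos_pos_of_mem_Ioo ⟨by linarith [pi_pos], hlt⟩
    calc x * cos x ≤ tan x * cos x := mul_le_mul_of_nonneg_right (le_tan hx₀ hlt) hc.le
      _ = sin x := by rw [tan_eq_sin_div_cos, div_mul_cancel₀ _ hc.ne']
  · have hc : cos x ≤ 0 := cos_nonpos_of_pi_div_two_le_of_le hge (by linarith [pi_pos])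
    nlinarith [sin_nonneg_of_nonneg_of_le_pi hx₀ hx]

lemma sin_sq_mul_cos_sq_mul_one_add_sq_le {x : ℝ} (hx₀ : 0 ≤ x) (hx : x ≤ π / 2) :
    sin x ^ 2 * cos x ^ 2 * (1 + x ^ 2) ≤ x ^ 2 := by
  have hc : 0 ≤ cos x := cos_nonneg_of_mem_Icc ⟨by linarith [pi_pos], hx⟩
  have hxc : (x * cos x) ^ 2 ≤ sin x ^ 2 :=
    pow_le_pow_left₀ (mul_nonneg hx₀ hc) (mul_cos_le_sin hx₀ (by linarith [pi_pos])) 2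
  calc sin x ^ 2 * cos x ^ 2 * (1 + x ^ 2)
      = sin x ^ 2 * (cos x ^ 2 + (x * cos x) ^ 2) := by ring
    _ ≤ sin x ^ 2 * (cos x ^ 2 + sin x ^ 2) := by gcongr
    _ = sin x ^ 2 := by rw [cos_sq_add_sin_sq, mul_one]
    _ ≤ x ^ 2 := sin_sq_le_sq

lemma sq_mul_sin_sq_le {y : ℝ} (hy₀ : 0 ≤ y) (hy : y ≤ π) :
    y ^ 2 * sin y ^ 2 ≤ 4 * (y ^ 2 - sin y ^ 2) := by
  have h := sin_sq_mul_cos_sq_mul_one_add_sq_le (x := y / 2) (by linarith) (by linarith)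
  have hsin : sin y = 2 * sin (y / 2) * cos (y / 2) := by
    rw [← sin_two_mul, mul_div_cancel₀ _ two_ne_zero]
  rw [hsin]
  nlinarith

lemma sub_sin_mul_cos_sq_le {y : ℝ} (hy₀ : 0 ≤ y) (hy : y ≤ π / 2) :
    (y - sin y * cos y) ^ 2 ≤ (y * sin y ^ 2) ^ 2 := by
  have hs : 0 ≤ sin y := sin_nonneg_of_nonneg_of_le_pi hy₀ (by linarith [pi_pos])
  have hc : 0 ≤ cos y := cos_nonneg_of_mem_Icc ⟨by linarith [pi_pos], hy⟩
  have hyc := mul_cos_le_sin hy₀ (by linarith [pi_pos])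
  have hlower : 0 ≤ y - sin y * cos y := by
    nlinarith [sin_le hy₀, cos_le_one y]
  have hupper : y - sin y * cos y ≤ y * sin y ^ 2 := by
    nlinarith [sin_sq_add_cos_sq y, mul_le_mul_of_nonneg_left hyc hc]
  exact pow_le_pow_left₀ hlower hupper 2

end Real

theorem Z1_ge_one (y : ℝ) (h0 : 0 ≤ y) (h1 : y < π / 2) :
    (if y = 0 then (1 : ℝ) else
      (2 * (y / Real.sin y) ^ 2 - 1) ^ 2 -
        (y / (Real.sin y) ^ 2 - Real.cos y / Real.sin y) ^ 2) ≥ 1 := by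
  rcases h0.eq_or_lt with rfl | hy
  · simp
  rw [if_neg hy.ne', ge_iff_le]
  have hs : 0 < sin y := sin_pos_of_pos_of_lt_pi hy (by linarith [pi_pos])
  have hkey := sq_mul_sin_sq_le hy.le (by linarith [pi_pos])
  have hdiff := sub_sin_mul_cos_sq_le hy.le h1.le
  have hsy := pow_le_pow_left₀ hs.le (sin_le hy.le) 2
  have hZ : (2 * (y / sin y) ^ 2 - 1) ^ 2 - (y / sin y ^ 2 - cos y / sin y) ^ 2 =
      ((2 * y ^ 2 - sin y ^ 2) ^ 2 - (y - sin y * cos y) ^ 2) / sin y ^ 4 := by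
    field_simp
  rw [hZ, le_div_iff₀ (by positivity)]
  nlinarith [mul_le_mul_of_nonneg_left hkey (sq_nonneg y),
    mul_le_mul_of_nonneg_left hsy (sq_nonneg (y * sin y))]
end

section
/- For all y with 0 ≤ y < π/4, one has Z₂(y) := (2·(y/cos y)^2 + 1)^2 − (y/cos²y + tan y)^2 ≥ 1. -/
/-!
Multiplying by `cos⁴ y`, the inequality becomes `(y + sin y cos y)² ≤ 4 y² (y² + cos² y)`.
By Cauchy–Schwarz, `(y·1 + sin y · cos y)² ≤ (y² + sin² y)(1 + cos² y)`, and `sin² y ≤ y²` bounds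
the first factor by `2 y²` and the second, `sin² y + 2 cos² y`, by `2 (y² + cos² y)`.
-/

open Real

lemma sq_add_sin_mul_cos_le (y : ℝ) : (y + sin y * cos y) ^ 2 ≤ 4 * y ^ 2 * (y ^ 2 + cos y ^ 2) := by
  have cauchy_schwarz : (y + sin y * cos y) ^ 2 ≤ (y ^ 2 + sin y ^ 2) * (1 + cos y ^ 2) := by
    nlinarith [sq_nonneg (y * cos y - sin y)]
  have hsin : sin y ^ 2 ≤ y ^ 2 := sin_sq_le_sq
  nlinarith [sin_sq_add_cos_sq y, sq_nonneg y, sq_nonneg (cos y)]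

-- Also valid at `c = 0`, where both sides are `0` because `x / 0 = 0`.
lemma sq_two_mul_div_sq_add_one_sub_sq_sub_one {K : Type*} [Field K] (a b c : K) :
    (2 * (a / c) ^ 2 + 1) ^ 2 - (a / c ^ 2 + b / c) ^ 2 - 1
      = (4 * a ^ 4 + 4 * a ^ 2 * c ^ 2 - (a + b * c) ^ 2) / c ^ 4 := by
  rcases eq_or_ne c 0 with rfl | hc
  · simp
  · field_simp
    ring

theorem Z2_ge_one_general (y : ℝ) :
    (2 * (y / Real.cos y) ^ 2 + 1) ^ 2 -
      (y / (Real.cos y) ^ 2 + Real.tan y) ^ 2 ≥ 1 := by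
  rw [tan_eq_sin_div_cos, ge_iff_le, ← sub_nonneg, sq_two_mul_div_sq_add_one_sub_sq_sub_one]
  have hnum := sq_add_sin_mul_cos_le y
  exact div_nonneg (by linarith) (by positivity)

theorem Z2_ge_one (y : ℝ) (h0 : 0 ≤ y) (h1 : y < π / 4) :
    (2 * (y / Real.cos y) ^ 2 + 1) ^ 2 -
      (y / (Real.cos y) ^ 2 + Real.tan y) ^ 2 ≥ 1 :=
  Z2_ge_one_general y
end

section
/- The function T(ω) = ω² + (ω/2)·sin(2ω) − 2·sin²(ω) is strictly positive for all ω with 0 < ω < π. -/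
/-!
Since T(0) = T'(0) = 0, it suffices that T'' > 0 on (0, π), where
T''(ω) = 4 sin ω (sin ω - ω cos ω). The factor sin ω - ω cos ω also vanishes at 0, with derivative
ω sin ω > 0 on (0, π). So one fact, that a function vanishing at the left endpoint of an interval
with positive derivative inside is positive on it, is applied three times.
-/

open Real Set

theorem pos_of_eq_zero_of_deriv_pos {f f' : ℝ → ℝ} {a b : ℝ} (hf : ∀ x, HasDerivAt f (f' x) x)
    (ha : f a = 0) (hf' : ∀ x ∈ Ioo a b, 0 < f' x) {x : ℝ} (hx : x ∈ Ioc a b) : 0 < f x := by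
  have hmono : StrictMonoOn f (Icc a b) := by
    refine strictMonoOn_of_deriv_pos (convex_Icc a b)
      (fun y _ => (hf y).continuousAt.continuousWithinAt) fun y hy => ?_
    rw [(hf y).deriv]
    exact hf' y (by rwa [interior_Icc] at hy)
  simpa [ha] using hmono (left_mem_Icc.2 (hx.1.le.trans hx.2)) (Ioc_subset_Icc_self hx) hx.1

theorem hasDerivAt_sin_sub_mul_cos (x : ℝ) :
    HasDerivAt (fun y => sin y - y * cos y) (x * sin x) x := by
  refine ((hasDerivAt_sin x).sub ((hasDerivAt_id x).mul (hasDerivAt_cos x))).congr_deriv ?_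
  simp only [id_eq]
  ring

theorem sin_sub_mul_cos_pos {x : ℝ} (h0 : 0 < x) (hπ : x < π) : 0 < sin x - x * cos x :=
  pos_of_eq_zero_of_deriv_pos (f := fun y => sin y - y * cos y) hasDerivAt_sin_sub_mul_cos
    (by simp) (fun y hy => mul_pos hy.1 (sin_pos_of_pos_of_lt_pi hy.1 hy.2)) ⟨h0, hπ.le⟩

noncomputable def T (ω : ℝ) : ℝ := ω ^ 2 + (ω / 2) * sin (2 * ω) - 2 * sin ω ^ 2

noncomputable def T' (ω : ℝ) : ℝ := 2 * ω - 3 / 2 * sin (2 * ω) + ω * cos (2 * ω)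

theorem hasDerivAt_sin_two_mul (x : ℝ) : HasDerivAt (fun y => sin (2 * y)) (2 * cos (2 * x)) x := by
  simpa [mul_comm] using ((hasDerivAt_id x).const_mul 2).sin

theorem hasDerivAt_cos_two_mul (x : ℝ) :
    HasDerivAt (fun y => cos (2 * y)) (-(2 * sin (2 * x))) x := by
  simpa [mul_comm] using ((hasDerivAt_id x).const_mul 2).cos

theorem hasDerivAt_T (x : ℝ) : HasDerivAt T (T' x) x := by
  have h := (((hasDerivAt_pow 2 x).add ((hasDerivAt_id x).div_const 2 |>.mul
    (hasDerivAt_sin_two_mul x))).sub (((hasDerivAt_sin x).pow 2).const_mul 2))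
  refine h.congr_deriv ?_
  rw [T', id_eq, sin_two_mul]
  ring

theorem hasDerivAt_T' (x : ℝ) : HasDerivAt T' (4 * sin x * (sin x - x * cos x)) x := by
  have h := (((hasDerivAt_id x).const_mul 2).sub ((hasDerivAt_sin_two_mul x).const_mul (3 / 2))).add
    ((hasDerivAt_id x).mul (hasDerivAt_cos_two_mul x))
  refine h.congr_deriv ?_
  rw [id_eq, sin_two_mul, cos_two_mul]
  linear_combination -4 * sin_sq_add_cos_sq x

theorem T'_pos {x : ℝ} (h0 : 0 < x) (hπ : x < π) : 0 < T' x :=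
  pos_of_eq_zero_of_deriv_pos hasDerivAt_T' (by simp [T'])
    (fun y hy => mul_pos (mul_pos four_pos (sin_pos_of_pos_of_lt_pi hy.1 hy.2))
      (sin_sub_mul_cos_pos hy.1 hy.2)) ⟨h0, hπ.le⟩

theorem T_pos (ω : ℝ) (h1 : 0 < ω) (h2 : ω < π) :
    ω ^ 2 + (ω / 2) * Real.sin (2 * ω) - 2 * (Real.sin ω) ^ 2 > 0 :=
  pos_of_eq_zero_of_deriv_pos hasDerivAt_T (by simp [T]) (fun _ hx => T'_pos hx.1 hx.2)
    ⟨h1, h2.le⟩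
end

section
/- The function K(ω) = sin²(ω) − sin(ω) − cos(ω)·(ω² − ω) is strictly positive for all ω with π/2 < ω < π. -/
open Real

/-- If `0 ≤ s` then `s - s² ≤ s (1 - s²) = c (s c) ≤ c / 2` by AM-GM; if `s < 0` every term is
positive. -/
lemma sq_sub_self_add_mul_pos_of_sq_add_sq_eq_one {s c t : ℝ} (hsc : s ^ 2 + c ^ 2 = 1)
    (hc : 0 < c) (ht : 1 / 2 < t) : 0 < s ^ 2 - s + c * t := by
  have hamgm : s * c ≤ 1 / 2 := by nlinarith [sq_nonneg (s - c)]
  have hct : c / 2 < c * t := by nlinarith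
  rcases le_or_gt 0 s with hs | hs
  · have hs1 : s ≤ 1 := by nlinarith
    nlinarith [mul_nonneg hs (mul_nonneg hs (sub_nonneg.mpr hs1))]
  · nlinarith

lemma one_half_lt_sq_sub_self {x : ℝ} (hx : 3 / 2 ≤ x) : 1 / 2 < x ^ 2 - x := by
  nlinarith

theorem K_pos (ω : ℝ) (h1 : π / 2 < ω) (h2 : ω < π) :
    (Real.sin ω) ^ 2 - Real.sin ω - Real.cos ω * (ω ^ 2 - ω) > 0 := by
  have hcos : 0 < -Real.cos ω := neg_pos.mpr (cos_neg_of_pi_div_two_lt_of_lt h1 (by linarith))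
  have hω : 1 / 2 < ω ^ 2 - ω := one_half_lt_sq_sub_self (by linarith [pi_gt_three])
  have := sq_sub_self_add_mul_pos_of_sq_add_sq_eq_one (s := Real.sin ω)
    (by rw [neg_sq]; exact sin_sq_add_cos_sq ω) hcos hω
  linarith
end

section
/- For every fixed r ∈ [−1, 1], the function Ψ(r, ω) = (ω/sin ω)²·(1 − r·cos ω), extended by continuity at ω = 0 with value 1 − r, is strictly increasing in ω on [0, π). -/
/-!
Write `Ψ(r, ω) = (sinc ω ^ 2)⁻¹ * (1 - r cos ω)`. On `[0, π)` the function `sinc` is positive and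
strictly decreasing (because `x cos x < sin x` there), so `(sinc ω ^ 2)⁻¹` is strictly increasing.
For `r ≥ 0` the factor `1 - r cos ω` is nondecreasing and positive for `ω > 0`, so the product is
strictly increasing. For `r < 0` the double-angle formulas `sinc ω = sinc (ω/2) cos (ω/2)` and
`cos ω = 2 cos² (ω/2) - 1` give `Ψ(r, ω) = (1 + r) / sinc² ω - 2r / sinc² (ω/2)`, a combination of
increasing functions with nonnegative coefficients `1 + r` and `-2r > 0`.
-/

open Real Set

lemma Real.mul_cos_lt_sin {x : ℝ} (h0 : 0 < x) (hπ : x < π) : x * cos x < sin x := by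
  rcases le_or_gt (cos x) 0 with hcos | hcos
  · nlinarith [sin_pos_of_pos_of_lt_pi h0 hπ]
  · have hx : x < π / 2 := by
      by_contra! hx
      linarith [cos_nonpos_of_pi_div_two_le_of_le hx (by linarith)]
    have := lt_tan h0 hx
    rwa [tan_eq_sin_div_cos, lt_div_iff₀ hcos] at this

lemma Real.sinc_strictAntiOn : StrictAntiOn sinc (Icc 0 π) := by
  refine strictAntiOn_of_deriv_neg (convex_Icc 0 π) continuous_sinc.continuousOn ?_
  rintro x hx
  rw [interior_Icc] at hx
  obtain ⟨hx0, hxπ⟩ := hx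
  have hderiv : HasDerivAt sinc ((cos x * x - sin x * 1) / x ^ 2) x := by
    refine ((hasDerivAt_sin x).div (hasDerivAt_id x) hx0.ne').congr_of_eventuallyEq ?_
    filter_upwards [eventually_ne_nhds hx0.ne'] with y hy using sinc_of_ne_zero hy
  rw [hderiv.deriv]
  have := mul_cos_lt_sin hx0 hxπ
  exact div_neg_of_neg_of_pos (by linarith) (by positivity)

lemma Real.sinc_pos_of_mem_Ico {x : ℝ} (hx : x ∈ Ico 0 π) : 0 < sinc x := by
  simpa [sinc_of_ne_zero pi_ne_zero] using
    sinc_strictAntiOn ⟨hx.1, hx.2.le⟩ ⟨pi_nonneg, le_rfl⟩ hx.2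

lemma Real.sinc_two_mul (x : ℝ) : sinc (2 * x) = sinc x * cos x := by
  rcases eq_or_ne x 0 with rfl | hx
  · simp
  · rw [sinc_of_ne_zero hx, sinc_of_ne_zero (by positivity), sin_two_mul]
    field_simp

lemma Real.inv_sinc_sq_strictMonoOn : StrictMonoOn (fun x => (sinc x ^ 2)⁻¹) (Ico 0 π) := by
  intro a ha b hb hab
  have hb0 := sinc_pos_of_mem_Ico hb
  have hba := sinc_strictAntiOn ⟨ha.1, ha.2.le⟩ ⟨hb.1, hb.2.le⟩ hab
  exact inv_strictAnti₀ (by positivity) (pow_lt_pow_left₀ hba hb0.le two_ne_zero)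

/-- `sinc 0 = 1` builds the continuous extension `Ψ(r, 0) = 1 - r` into the definition. -/
noncomputable def Psi (r ω : ℝ) : ℝ := (sinc ω ^ 2)⁻¹ * (1 - r * cos ω)

lemma ite_eq_Psi (r ω : ℝ) :
    (if ω = 0 then 1 - r else (ω / sin ω) ^ 2 * (1 - r * cos ω)) = Psi r ω := by
  rcases eq_or_ne ω 0 with rfl | hω
  · simp [Psi]
  · rw [if_neg hω, Psi, sinc_of_ne_zero hω, ← inv_pow, inv_div]

lemma Psi_eq_sub_half_angle (r ω : ℝ) (hc : cos (ω / 2) ≠ 0) :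
    Psi r ω = (1 + r) * (sinc ω ^ 2)⁻¹ - 2 * r * (sinc (ω / 2) ^ 2)⁻¹ := by
  have hsinc := sinc_two_mul (ω / 2)
  have hcos := cos_two_mul (ω / 2)
  rw [mul_div_cancel₀ _ two_ne_zero] at hsinc hcos
  rw [Psi, hsinc, hcos]
  rcases eq_or_ne (sinc (ω / 2)) 0 with hs | hs
  · simp [hs]
  · field_simp
    ring

lemma Psi_strictMonoOn_of_nonneg {r : ℝ} (hr0 : 0 ≤ r) (hr1 : r ≤ 1) :
    StrictMonoOn (Psi r) (Ico 0 π) := by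
  intro a ha b hb hab
  have hb0 : 0 < b := ha.1.trans_lt hab
  have hcos : cos b < cos a := cos_lt_cos_of_nonneg_of_le_pi ha.1 hb.2.le hab
  have hcos_b : cos b < 1 := by simpa using cos_lt_cos_of_nonneg_of_le_pi le_rfl hb.2.le hb0
  have hfb : 0 < 1 - r * cos b := by
    nlinarith [mul_nonneg hr0 (sub_nonneg.2 hcos_b.le),
      mul_nonneg (sub_nonneg.2 hr1) (neg_le_iff_add_nonneg.1 (neg_one_le_cos b))]
  calc Psi r a ≤ (sinc a ^ 2)⁻¹ * (1 - r * cos b) := by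
        unfold Psi; gcongr
    _ < Psi r b := mul_lt_mul_of_pos_right (inv_sinc_sq_strictMonoOn ha hb hab) hfb

lemma Psi_strictMonoOn_of_neg {r : ℝ} (hr1 : -1 ≤ r) (hr0 : r < 0) :
    StrictMonoOn (Psi r) (Ico 0 π) := by
  have half_mem : ∀ x ∈ Ico 0 π, x / 2 ∈ Ico 0 π := fun x hx =>
    ⟨by linarith [hx.1], by linarith [hx.2, pi_pos]⟩
  have cos_half_ne : ∀ x ∈ Ico 0 π, cos (x / 2) ≠ 0 := fun x hx =>
    (cos_pos_of_mem_Ioo ⟨by linarith [hx.1, pi_pos], by linarith [hx.2]⟩).ne'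
  intro a ha b hb hab
  rw [Psi_eq_sub_half_angle r a (cos_half_ne a ha), Psi_eq_sub_half_angle r b (cos_half_ne b hb)]
  have h1 := (inv_sinc_sq_strictMonoOn ha hb hab).le
  have h2 := inv_sinc_sq_strictMonoOn (half_mem a ha) (half_mem b hb) (by linarith)
  dsimp only at h1 h2
  nlinarith

theorem Psi_strictMono (r : ℝ) (hr : r ∈ Set.Icc (-1 : ℝ) 1) :
    StrictMonoOn
      (fun ω : ℝ => if ω = 0 then 1 - r
        else (ω / Real.sin ω) ^ 2 * (1 - r * Real.cos ω))
      (Set.Ico 0 π) := by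
  simp only [ite_eq_Psi]
  rcases le_or_gt 0 r with hr0 | hr0
  · exact Psi_strictMonoOn_of_nonneg hr0 hr.2
  · exact Psi_strictMonoOn_of_neg hr.1 hr0
end

section
/- For all r ∈ [−1, 1] and all ω ∈ [0, π), Φ(r, ω) := (ω/sin ω)²·(1 − r·cos ω) + r ≥ 1 (with the convention (ω/sin ω)² = 1 at ω = 0). -/
/-! Φ is affine in `r`, so it suffices to check `r = 1`, where `Φ = 1 + c (1 - cos ω) ≥ 1`, and
`r = -1`, where `Φ ≥ 1` amounts to `c (1 + cos ω) ≥ 2` for `c = (ω / sin ω)²`. Since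
`sin² ω = (1 - cos ω)(1 + cos ω)`, the latter reads `ω² ≥ 2 (1 - cos ω)`, i.e. `cos ω ≥ 1 - ω²/2`. -/

open Real

lemma one_le_mul_one_sub_mul_add {c x r : ℝ} (hc : 0 ≤ c) (hx : x ≤ 1)
    (hcx : 2 ≤ c * (1 + x)) (hr : r ∈ Set.Icc (-1 : ℝ) 1) :
    1 ≤ c * (1 - r * x) + r := by
  obtain ⟨hr₁, hr₂⟩ := hr
  have hleft : 0 ≤ (1 - r) * (c * (1 + x) - 2) := mul_nonneg (by linarith) (by linarith)
  have hright : 0 ≤ (1 + r) * (c * (1 - x)) := mul_nonneg (by linarith) (by nlinarith)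
  nlinarith

lemma Real.two_le_sq_div_sin_sq_mul_one_add_cos {ω : ℝ} (hs : sin ω ≠ 0) :
    2 ≤ (ω / sin ω) ^ 2 * (1 + cos ω) := by
  have hsin_sq : sin ω ^ 2 = (1 - cos ω) * (1 + cos ω) := by
    nlinarith [sin_sq_add_cos_sq ω]
  have hprod : 0 < (1 - cos ω) * (1 + cos ω) := hsin_sq ▸ by positivity
  have hsub : 0 < 1 - cos ω := by nlinarith [neg_one_le_cos ω]
  have hadd : 0 < 1 + cos ω := by nlinarith [cos_le_one ω]
  calc 2 ≤ ω ^ 2 / (1 - cos ω) := by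
        rw [le_div_iff₀ hsub]; linarith [one_sub_sq_div_two_le_cos (x := ω)]
    _ = (ω / sin ω) ^ 2 * (1 + cos ω) := by
        rw [div_pow, hsin_sq]; field_simp

theorem Phi_ge_one (r ω : ℝ) (hr : r ∈ Set.Icc (-1 : ℝ) 1)
    (hω : ω ∈ Set.Ico 0 π) :
    (if ω = 0 then (1 : ℝ) else (ω / Real.sin ω) ^ 2) * (1 - r * Real.cos ω)
      + r ≥ 1 := by
  by_cases h₀ : ω = 0
  · simp [h₀]
  rw [if_neg h₀]
  have hs : 0 < sin ω := sin_pos_of_pos_of_lt_pi (lt_of_le_of_ne hω.1 (Ne.symm h₀)) hω.2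
  exact one_le_mul_one_sub_mul_add (sq_nonneg _) (cos_le_one ω)
    (two_le_sq_div_sin_sq_mul_one_add_cos hs.ne') hr
end

section
/- For all ω with 0 < ω ≤ π/2, one has 1 − 1/sin(ω) + (ω·cos(ω)/sin²(ω))·(1 − ω) ≤ 0. -/
open Real

lemma Real.mul_cos_le_sin_s10 {x : ℝ} (hx₀ : 0 ≤ x) (hx : x ≤ π / 2) : x * cos x ≤ sin x := by
  rcases hx.lt_or_eq with hx | rfl
  · have hcos : 0 < cos x := cos_pos_of_mem_Ioo ⟨by linarith [pi_pos], hx⟩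
    simpa [tan_eq_sin_div_cos, le_div_iff₀ hcos] using le_tan hx₀ hx
  · simp

lemma Real.sin_sq_sub_sin_add_mul_cos_mul_one_sub_nonpos {x : ℝ} (hx₀ : 0 ≤ x) (hx : x ≤ π / 2) :
    sin x ^ 2 - sin x + x * cos x * (1 - x) ≤ 0 := by
  have hsin₀ : 0 ≤ sin x := sin_nonneg_of_nonneg_of_le_pi hx₀ (by linarith [pi_pos])
  rcases le_or_gt x 1 with hx₁ | hx₁
  · calc sin x ^ 2 - sin x + x * cos x * (1 - x)
        ≤ sin x ^ 2 - sin x + sin x * (1 - x) := by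
          gcongr
          exact mul_cos_le_sin_s10 hx₀ hx
      _ = sin x * (sin x - x) := by ring
      _ ≤ 0 := mul_nonpos_of_nonneg_of_nonpos hsin₀ (by linarith [sin_le hx₀])
  · have hcos : 0 ≤ cos x := cos_nonneg_of_mem_Icc ⟨by linarith [pi_pos], hx⟩
    have hlast : x * cos x * (1 - x) ≤ 0 :=
      mul_nonpos_of_nonneg_of_nonpos (by positivity) (by linarith)
    have hsq : sin x ^ 2 ≤ sin x := by nlinarith [sin_le_one x]
    linarith

theorem G1_deriv_nonpos (ω : ℝ) (h1 : 0 < ω) (h2 : ω ≤ π / 2) :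
    1 - 1 / Real.sin ω + (ω * Real.cos ω / (Real.sin ω) ^ 2) * (1 - ω) ≤ 0 := by
  have hsin : 0 < sin ω := sin_pos_of_pos_of_lt_pi h1 (by linarith [pi_pos])
  have hnum := sin_sq_sub_sin_add_mul_cos_mul_one_sub_nonpos h1.le h2
  calc 1 - 1 / sin ω + ω * cos ω / sin ω ^ 2 * (1 - ω)
      = (sin ω ^ 2 - sin ω + ω * cos ω * (1 - ω)) / sin ω ^ 2 := by
        field_simp
    _ ≤ 0 := div_nonpos_of_nonpos_of_nonneg hnum (sq_nonneg _)
end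

section
/- Let x, x' ∈ ℝⁿ and u, u' ∈ ℝ, and define d_K((x,u),(x',u')) = (√((|x|²+|x'|²)² + (2|u−u'|)²) − 2⟨x, x'⟩)^{1/2}. Then d_K((x,u),(x',u')) < 1 if and only if |x' − x| < 1 and 2|u' − u| < √(1 − |x'−x|²) · √(1 + |x'+x|²). -/
/-!
By the parallelogram law, `‖x‖² + ‖x'‖² = (s + S) / 2` and `2⟪x, x'⟫ = (S - s) / 2` with
`s = ‖x' - x‖²`, `S = ‖x' + x‖²`. Removing both square roots, `d_K < 1` becomes
`t² < (1 + (S - s) / 2)² - ((s + S) / 2)² = (1 - s)(1 + S)` with `t = 2|u - u'|`, and since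
`1 + S > 0` this forces `s < 1`.
-/

open scoped RealInnerProductSpace

lemma sqrt_sqrt_sq_add_sq_sub_lt_one_iff (s S t : ℝ) (hS : 0 ≤ S) (ht : 0 ≤ t) :
    √(√(((s + S) / 2) ^ 2 + t ^ 2) - (S - s) / 2) < 1 ↔ s < 1 ∧ t < √(1 - s) * √(1 + S) := by
  rw [Real.sqrt_lt' one_pos, one_pow, ← Real.sqrt_mul' _ (by linarith), Real.lt_sqrt ht]
  have hfactor : (1 + (S - s) / 2) ^ 2 = ((s + S) / 2) ^ 2 + (1 - s) * (1 + S) := by ring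
  constructor
  · intro h
    have hpos : 0 < 1 + (S - s) / 2 := by linarith [Real.sqrt_nonneg (((s + S) / 2) ^ 2 + t ^ 2)]
    have hlt : ((s + S) / 2) ^ 2 + t ^ 2 < (1 + (S - s) / 2) ^ 2 :=
      (Real.sqrt_lt' hpos).mp (by linarith)
    have hts : t ^ 2 < (1 - s) * (1 + S) := by linarith
    have hs : s < 1 := by nlinarith [sq_nonneg t]
    exact ⟨hs, hts⟩
  · rintro ⟨hs, hts⟩
    have hlt : √(((s + S) / 2) ^ 2 + t ^ 2) < 1 + (S - s) / 2 :=
      (Real.sqrt_lt' (by linarith)).mpr (by linarith)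
    linarith

theorem dK_lt_one_iff (n : ℕ) (x x' : EuclideanSpace ℝ (Fin n)) (u u' : ℝ) :
    Real.sqrt (Real.sqrt ((‖x‖ ^ 2 + ‖x'‖ ^ 2) ^ 2 + (2 * |u - u'|) ^ 2)
        - 2 * ⟪x, x'⟫) < 1 ↔
      ‖x' - x‖ < 1 ∧
        2 * |u' - u| < Real.sqrt (1 - ‖x' - x‖ ^ 2) * Real.sqrt (1 + ‖x' + x‖ ^ 2) := by
  have hnorms : ‖x‖ ^ 2 + ‖x'‖ ^ 2 = (‖x' - x‖ ^ 2 + ‖x' + x‖ ^ 2) / 2 := by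
    rw [norm_sub_sq_real, norm_add_sq_real]; ring
  have hinner : 2 * ⟪x, x'⟫ = (‖x' + x‖ ^ 2 - ‖x' - x‖ ^ 2) / 2 := by
    rw [norm_sub_sq_real, norm_add_sq_real, real_inner_comm]; ring
  rw [hnorms, hinner, abs_sub_comm u' u, ← sq_lt_one_iff₀ (norm_nonneg (x' - x))]
  exact sqrt_sqrt_sq_add_sq_sub_lt_one_iff _ _ _ (sq_nonneg _) (by positivity)
end

section
/- There exists a constant c > 1 (independent of n and β) such that for every integer n ≥ 2 and every real β ≥ 1, the integral Y = ∫₀^∞ (1 + 2β·sinh²(λ))^{−n/2} dλ satisfies c⁻¹·n^{−1/2}·β^{−1/2} ≤ Y ≤ c·n^{−1/2}·β^{−1/2}. -/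
/-!
Since `sinh² λ ≥ λ²`, Bernoulli's inequality `(1 + u)^p ≥ 1 + p u` bounds the integrand by
`(1 + nβ λ²)⁻¹`, whose integral over `(0, ∞)` is `π / (2 √(nβ))`. Conversely, on the interval
`(0, (nβ)^{-1/2}]` we have `sinh λ ≤ 2λ`, so `log (1 + 2β sinh² λ) ≤ 8β λ² ≤ 8 / n` and the
integrand is at least `e⁻⁴`.
-/

open Real MeasureTheory Set

namespace Real

theorem abs_sinh_le_two_mul_abs {x : ℝ} (hx : |x| ≤ 1) : |sinh x| ≤ 2 * |x| := by
  have hpos := abs_le.mp (abs_exp_sub_one_le hx)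
  have hneg := abs_le.mp (abs_exp_sub_one_le (x := -x) (by rwa [abs_neg]))
  rw [abs_neg] at hneg
  rw [sinh_eq, abs_le]
  constructor <;> linarith [hpos.1, hpos.2, hneg.1, hneg.2]

theorem sq_le_sinh_sq (x : ℝ) : x ^ 2 ≤ sinh x ^ 2 := by
  rw [← sq_abs, ← sq_abs (sinh x), abs_sinh]
  exact pow_le_pow_left₀ (abs_nonneg x) (self_le_sinh_iff.mpr (abs_nonneg x)) 2

theorem sinh_sq_le_four_mul_sq {x : ℝ} (hx : |x| ≤ 1) : sinh x ^ 2 ≤ 4 * x ^ 2 := by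
  rw [← sq_abs, ← sq_abs x]
  nlinarith [abs_sinh_le_two_mul_abs hx, abs_nonneg (sinh x)]

end Real

theorem integrable_inv_one_add_mul_sq {a : ℝ} (ha : 0 < a) :
    Integrable fun x : ℝ ↦ (1 + a * x ^ 2)⁻¹ := by
  have h := integrable_inv_one_add_sq.comp_mul_left' (sqrt_pos.mpr ha).ne'
  simpa only [mul_pow, sq_sqrt ha.le] using h

theorem integral_Ioi_inv_one_add_mul_sq {a : ℝ} (ha : 0 < a) :
    ∫ x in Ioi (0 : ℝ), (1 + a * x ^ 2)⁻¹ = π / 2 / √a := by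
  have h := integral_comp_mul_left_Ioi (fun x : ℝ ↦ (1 + x ^ 2)⁻¹) 0 (sqrt_pos.mpr ha)
  simp only [mul_pow, sq_sqrt ha.le, mul_zero, integral_Ioi_inv_one_add_sq, arctan_zero,
    sub_zero, smul_eq_mul] at h
  rw [h, div_eq_inv_mul]
  ring

section SinhIntegrand

variable {p b : ℝ}

theorem rpow_neg_one_add_mul_sinh_sq_le (hp : 1 ≤ p) (hb : 0 ≤ b) (x : ℝ) :
    (1 + b * sinh x ^ 2) ^ (-p) ≤ (1 + p * b * x ^ 2)⁻¹ := by
  have hbernoulli : 1 + p * (b * sinh x ^ 2) ≤ (1 + b * sinh x ^ 2) ^ p :=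
    one_add_mul_self_le_rpow_one_add (by nlinarith [sq_nonneg (sinh x)]) hp
  have hsq : p * b * x ^ 2 ≤ p * (b * sinh x ^ 2) := by
    rw [mul_assoc]
    exact mul_le_mul_of_nonneg_left (mul_le_mul_of_nonneg_left (sq_le_sinh_sq x) hb)
      (by linarith)
  rw [rpow_neg (by positivity)]
  exact inv_anti₀ (by positivity) (by linarith)

theorem exp_neg_four_le_rpow_neg_one_add_mul_sinh_sq (hp : 0 ≤ p) (hb : 0 ≤ b) {x : ℝ}
    (hx : |x| ≤ 1) (hpbx : p * b * x ^ 2 ≤ 1) :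
    exp (-4) ≤ (1 + b * sinh x ^ 2) ^ (-p) := by
  have hbase : 0 < 1 + b * sinh x ^ 2 := by positivity
  have hlog : log (1 + b * sinh x ^ 2) ≤ 4 * b * x ^ 2 := by
    have := mul_le_mul_of_nonneg_left (sinh_sq_le_four_mul_sq hx) hb
    linarith [log_le_sub_one_of_pos hbase]
  rw [rpow_def_of_pos hbase, exp_le_exp]
  nlinarith [mul_le_mul_of_nonneg_left hlog hp]

theorem integrable_rpow_neg_one_add_mul_sinh_sq (hp : 1 ≤ p) (hb : 0 < b) :
    Integrable fun x ↦ (1 + b * sinh x ^ 2) ^ (-p) := by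
  refine (integrable_inv_one_add_mul_sq (by positivity : 0 < p * b)).mono' ?_ ?_
  · refine (Continuous.rpow_const (by fun_prop) fun x ↦ Or.inl ?_).aestronglyMeasurable
    positivity
  · refine ae_of_all _ fun x ↦ ?_
    rw [norm_of_nonneg (by positivity)]
    exact rpow_neg_one_add_mul_sinh_sq_le hp hb.le x

theorem integral_rpow_neg_one_add_mul_sinh_sq_le (hp : 1 ≤ p) (hb : 0 < b) :
    ∫ x in Ioi (0 : ℝ), (1 + b * sinh x ^ 2) ^ (-p) ≤ π / 2 / √(p * b) := by
  rw [← integral_Ioi_inv_one_add_mul_sq (by positivity : 0 < p * b)]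
  exact setIntegral_mono (integrable_rpow_neg_one_add_mul_sinh_sq hp hb).integrableOn
    (integrable_inv_one_add_mul_sq (by positivity)).integrableOn
    (rpow_neg_one_add_mul_sinh_sq_le hp hb.le)

theorem exp_neg_four_div_le_integral_rpow_neg_one_add_mul_sinh_sq (hp : 1 ≤ p) (hb : 0 < b)
    (hpb : 1 ≤ p * b) :
    exp (-4) / √(p * b) ≤ ∫ x in Ioi (0 : ℝ), (1 + b * sinh x ^ 2) ^ (-p) := by
  set t := (√(p * b))⁻¹
  have ht : 0 < t := by positivity
  have ht_le_one : t ≤ 1 := inv_le_one_of_one_le₀ (one_le_sqrt.mpr hpb)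
  have hpbt : p * b * t ^ 2 = 1 := by
    rw [inv_pow, sq_sqrt (by positivity), mul_inv_cancel₀ (by positivity)]
  have hbound : ∀ x ∈ Ioc 0 t, exp (-4) ≤ (1 + b * sinh x ^ 2) ^ (-p) := by
    rintro x ⟨hx0, hxt⟩
    refine exp_neg_four_le_rpow_neg_one_add_mul_sinh_sq (by linarith) hb.le ?_ ?_
    · rw [abs_of_pos hx0]
      linarith
    · rw [← hpbt]
      gcongr
  have hint := integrable_rpow_neg_one_add_mul_sinh_sq hp hb
  calc exp (-4) / √(p * b) = exp (-4) * volume.real (Ioc 0 t) := by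
        rw [volume_real_Ioc_of_le ht.le, sub_zero, div_eq_mul_inv]
    _ ≤ ∫ x in Ioc 0 t, (1 + b * sinh x ^ 2) ^ (-p) :=
        setIntegral_ge_of_const_le_real measurableSet_Ioc measure_Ioc_lt_top.ne hbound
          hint.integrableOn
    _ ≤ ∫ x in Ioi 0, (1 + b * sinh x ^ 2) ^ (-p) :=
        setIntegral_mono_set hint.integrableOn (ae_of_all _ fun x ↦ by positivity)
          Ioc_subset_Ioi_self.eventuallyLE

end SinhIntegrand

theorem Y_estimate :
    ∃ c : ℝ, 1 < c ∧ ∀ n : ℕ, 2 ≤ n → ∀ β : ℝ, 1 ≤ β →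
      c⁻¹ * (n : ℝ) ^ (-(1 : ℝ) / 2) * β ^ (-(1 : ℝ) / 2) ≤
        (∫ lam in Set.Ioi (0 : ℝ),
          (1 + 2 * β * Real.sinh lam ^ 2) ^ (-(n : ℝ) / 2)) ∧
      (∫ lam in Set.Ioi (0 : ℝ),
          (1 + 2 * β * Real.sinh lam ^ 2) ^ (-(n : ℝ) / 2)) ≤
        c * (n : ℝ) ^ (-(1 : ℝ) / 2) * β ^ (-(1 : ℝ) / 2) := by
  refine ⟨exp 4, one_lt_exp_iff.mpr (by norm_num), fun n hn β hβ ↦ ?_⟩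
  have hn' : (2 : ℝ) ≤ n := by exact_mod_cast hn
  have hp : 1 ≤ (n : ℝ) / 2 := by linarith
  have hb : 0 < 2 * β := by linarith
  have hpb : (n : ℝ) / 2 * (2 * β) = n * β := by ring
  have hscale : (n : ℝ) ^ (-(1 : ℝ) / 2) * β ^ (-(1 : ℝ) / 2) = 1 / √(n * β) := by
    rw [← mul_rpow (by positivity) (by positivity), neg_div, rpow_neg (by positivity),
      sqrt_eq_rpow, one_div, one_div]
  rw [neg_div 2 (n : ℝ), mul_assoc, mul_assoc, hscale]
  constructor
  · calc (exp 4)⁻¹ * (1 / √(n * β)) = exp (-4) / √(n / 2 * (2 * β)) := by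
          rw [hpb, exp_neg]; ring
      _ ≤ _ := exp_neg_four_div_le_integral_rpow_neg_one_add_mul_sinh_sq hp hb (by nlinarith)
  · calc _ ≤ π / 2 / √(n / 2 * (2 * β)) := integral_rpow_neg_one_add_mul_sinh_sq_le hp hb
      _ ≤ exp 4 * (1 / √(n * β)) := by
          rw [hpb, mul_one_div]
          gcongr
          linarith [pi_le_four, add_one_le_exp (4 : ℝ)]
end

section
/- For every real β₁ and every β₂ with 0 ≤ β₂ ≤ π/2 such that β₁ + i·β₂ ≠ 0, the real part of sinh(β₁ + i β₂)/(β₁ + i β₂) is strictly positive; explicitly, Re(sinh(β₁+iβ₂)/(β₁+iβ₂)) = (β₁·sinh(β₁)·cos(β₂) + β₂·sin(β₂)·cosh(β₁))/(β₁² + β₂²) > 0 whenever (β₁, β₂) ≠ (0,0). -/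
open Complex Real

/-!
Writing `z = x + yi`, one has `Re (sinh z / z) = Re (sinh z · z̄) / |z|²` and
`sinh z = sinh x cos y + i cosh x sin y`, which gives the explicit formula. In the strip
`|y| ≤ π/2` both summands `x sinh x · cos y` and `y sin y · cosh x` of its numerator are
nonnegative, and one of them is positive as soon as `z ≠ 0`.
-/

theorem Complex.re_sinh_div_self (x y : ℝ) :
    (sinh (x + y * I) / (x + y * I)).re =
      (x * Real.sinh x * Real.cos y + y * Real.sin y * Real.cosh x) / (x ^ 2 + y ^ 2) := by
  rw [div_re, sinh_add, sinh_mul_I, cosh_mul_I]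
  simp only [add_re, add_im, mul_re, mul_im, ofReal_re, ofReal_im, I_re, I_im, sinh_ofReal_re,
    sinh_ofReal_im, cosh_ofReal_re, cosh_ofReal_im, cos_ofReal_re, cos_ofReal_im, sin_ofReal_re,
    sin_ofReal_im, normSq_apply, mul_zero, zero_mul, mul_one, sub_zero, sub_self, add_zero,
    zero_add]
  ring

namespace Real

theorem mul_sinh_self_pos {x : ℝ} (hx : x ≠ 0) : 0 < x * sinh x := by
  rcases hx.lt_or_gt with hneg | hpos
  · exact mul_pos_of_neg_of_neg hneg (sinh_neg_iff.2 hneg)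
  · exact mul_pos hpos (sinh_pos_iff.2 hpos)

theorem mul_sinh_self_nonneg (x : ℝ) : 0 ≤ x * sinh x := by
  rcases eq_or_ne x 0 with rfl | hx
  · simp
  · exact (mul_sinh_self_pos hx).le

theorem mul_sin_self_pos {y : ℝ} (hy : y ≠ 0) (hyπ : |y| < π) : 0 < y * sin y := by
  rw [abs_lt] at hyπ
  rcases hy.lt_or_gt with hneg | hpos
  · have : 0 < sin (-y) := sin_pos_of_pos_of_lt_pi (by linarith) (by linarith)
    exact mul_pos_of_neg_of_neg hneg (by rwa [sin_neg, neg_pos] at this)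
  · exact mul_pos hpos (sin_pos_of_pos_of_lt_pi hpos hyπ.2)

theorem mul_sin_self_nonneg {y : ℝ} (hyπ : |y| < π) : 0 ≤ y * sin y := by
  rcases eq_or_ne y 0 with rfl | hy
  · simp
  · exact (mul_sin_self_pos hy hyπ).le

theorem mul_sinh_mul_cos_add_mul_sin_mul_cosh_pos {x y : ℝ} (hy : |y| ≤ π / 2)
    (hxy : (x, y) ≠ (0, 0)) :
    0 < x * sinh x * cos y + y * sin y * cosh x := by
  have hyπ : |y| < π := hy.trans_lt (by linarith [pi_pos])
  have hcos : 0 ≤ cos y := cos_nonneg_of_neg_pi_div_two_le_of_le (abs_le.1 hy).1 (abs_le.1 hy).2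
  have hsinh : 0 ≤ x * sinh x * cos y := mul_nonneg (mul_sinh_self_nonneg x) hcos
  have hsin : 0 ≤ y * sin y * cosh x := mul_nonneg (mul_sin_self_nonneg hyπ) (cosh_pos x).le
  rcases eq_or_ne y 0 with rfl | hy0
  · have hx : x ≠ 0 := fun hx => hxy (by rw [hx])
    simpa using mul_sinh_self_pos hx
  · linarith [mul_pos (mul_sin_self_pos hy0 hyπ) (cosh_pos x)]

end Real

theorem re_sinh_div_pos (β₁ β₂ : ℝ) (h0 : 0 ≤ β₂) (h2 : β₂ ≤ Real.pi / 2)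
    (hne : (β₁, β₂) ≠ (0, 0)) :
    (Complex.sinh (β₁ + β₂ * Complex.I) / (β₁ + β₂ * Complex.I)).re =
      (β₁ * Real.sinh β₁ * Real.cos β₂ + β₂ * Real.sin β₂ * Real.cosh β₁) /
        (β₁ ^ 2 + β₂ ^ 2) ∧
    0 < (Complex.sinh (β₁ + β₂ * Complex.I) / (β₁ + β₂ * Complex.I)).re := by
  have hnorm : 0 < β₁ ^ 2 + β₂ ^ 2 := by
    rcases not_and_or.1 (Prod.mk_inj.not.1 hne) with h | h <;> positivity
  have hstrip : |β₂| ≤ π / 2 := by rwa [abs_of_nonneg h0]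
  rw [Complex.re_sinh_div_self]
  exact ⟨rfl, div_pos (mul_sinh_mul_cos_add_mul_sin_mul_cosh_pos hstrip hne) hnorm⟩
end

section
/- Let x, z ∈ ℝⁿ with x ≠ 0 and let 0 < ω < π. If (ω/sin ω)²·(|z|² + 2⟨x + z, x⟩·(1 − cos ω)) < 1, where x' = x + z, then |z| < 1. -/
/-!
Writing `c = cos ω`, the quadratic form splits as
`‖z‖² + 2⟪x + z, x⟫(1 - c) = ‖z‖² (1 + c)/2 + ‖z + 2x‖² (1 - c)/2 ≥ ‖z‖² cos²(ω/2)`,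
and `(ω / sin ω)² cos²(ω/2) = ((ω/2) / sin(ω/2))² ≥ 1` because `|sin θ| ≤ |θ|`.
So `‖z‖²` is bounded by the left-hand side of the hypothesis.
-/

open Real
open scoped RealInnerProductSpace

section InnerProductSpace

variable {E : Type*} [NormedAddCommGroup E] [InnerProductSpace ℝ E]

lemma norm_sq_add_two_inner_mul_eq (x z : E) (c : ℝ) :
    ‖z‖ ^ 2 + 2 * ⟪x + z, x⟫ * (1 - c) =
      ‖z‖ ^ 2 * ((1 + c) / 2) + ‖z + (2 : ℝ) • x‖ ^ 2 * ((1 - c) / 2) := by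
  rw [norm_add_sq_real, norm_smul, inner_smul_right, inner_add_left, real_inner_self_eq_norm_sq,
    real_inner_comm x z, Real.norm_two]
  ring

lemma norm_sq_mul_cos_half_sq_le (x z : E) (ω : ℝ) :
    ‖z‖ ^ 2 * cos (ω / 2) ^ 2 ≤ ‖z‖ ^ 2 + 2 * ⟪x + z, x⟫ * (1 - cos ω) := by
  have hcos_half : cos (ω / 2) ^ 2 = (1 + cos ω) / 2 := by
    rw [cos_sq, mul_div_cancel₀ _ two_ne_zero]; ring
  rw [norm_sq_add_two_inner_mul_eq, hcos_half, le_add_iff_nonneg_right]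
  have : 0 ≤ 1 - cos ω := sub_nonneg.2 (cos_le_one ω)
  positivity

end InnerProductSpace

lemma one_le_div_sin_sq {θ : ℝ} (h : sin θ ≠ 0) : 1 ≤ (θ / sin θ) ^ 2 := by
  rw [div_pow, one_le_div (by positivity), ← sq_abs, ← sq_abs θ]
  exact pow_le_pow_left₀ (abs_nonneg _) abs_sin_le_abs 2

lemma div_sin_sq_mul_cos_half_sq {ω : ℝ} (h : cos (ω / 2) ≠ 0) :
    (ω / sin ω) ^ 2 * cos (ω / 2) ^ 2 = (ω / 2 / sin (ω / 2)) ^ 2 := by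
  conv_lhs => rw [← mul_div_cancel₀ ω two_ne_zero, sin_two_mul]
  field_simp

lemma one_le_div_sin_sq_mul_cos_half_sq {ω : ℝ} (h1 : 0 < ω) (h2 : ω < π) :
    1 ≤ (ω / sin ω) ^ 2 * cos (ω / 2) ^ 2 := by
  have hcos : cos (ω / 2) ≠ 0 := (cos_pos_of_mem_Ioo ⟨by linarith, by linarith⟩).ne'
  have hsin : sin (ω / 2) ≠ 0 := (sin_pos_of_pos_of_lt_pi (by linarith) (by linarith)).ne'
  rw [div_sin_sq_mul_cos_half_sq hcos]
  exact one_le_div_sin_sq hsin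

theorem ball_cc_radius_general (n : ℕ) (x z : EuclideanSpace ℝ (Fin n))
    (ω : ℝ) (h1 : 0 < ω) (h2 : ω < π)
    (h : (ω / Real.sin ω) ^ 2 *
        (‖z‖ ^ 2 + 2 * ⟪x + z, x⟫ * (1 - Real.cos ω)) < 1) :
    ‖z‖ < 1 := by
  have hsq : ‖z‖ ^ 2 < 1 :=
    calc ‖z‖ ^ 2 ≤ ‖z‖ ^ 2 * ((ω / sin ω) ^ 2 * cos (ω / 2) ^ 2) :=
          le_mul_of_one_le_right (by positivity) (one_le_div_sin_sq_mul_cos_half_sq h1 h2)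
      _ = (ω / sin ω) ^ 2 * (‖z‖ ^ 2 * cos (ω / 2) ^ 2) := by ring
      _ ≤ (ω / sin ω) ^ 2 * (‖z‖ ^ 2 + 2 * ⟪x + z, x⟫ * (1 - cos ω)) :=
          mul_le_mul_of_nonneg_left (norm_sq_mul_cos_half_sq_le x z ω) (by positivity)
      _ < 1 := h
  exact (pow_lt_one_iff_of_nonneg (norm_nonneg z) two_ne_zero).1 hsq

theorem ball_cc_radius (n : ℕ) (x z : EuclideanSpace ℝ (Fin n)) (hx : x ≠ 0)
    (ω : ℝ) (h1 : 0 < ω) (h2 : ω < π)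
    (h : (ω / Real.sin ω) ^ 2 *
        (‖z‖ ^ 2 + 2 * ⟪x + z, x⟫ * (1 - Real.cos ω)) < 1) :
    ‖z‖ < 1 :=
  ball_cc_radius_general n x z ω h1 h2 h
end
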